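/- For every integer n ≥ 1, ∑_{t∈ℱ_n} 1/t! = (2n−2)!/(2^{n−1}·n!·(n−1)!), where the sum is over all rooted plane trees with n nodes; equivalently, the generating function ∑_{t∈ℱ} z^{|t|}/t! over all rooted plane trees equals 1 − √(1−2z). -/

import Mathlib

/-!
Removing the root identifies the plane trees with `m + 1` nodes with the plane forests with `m`
nodes, and `t! = |t| · ∏ tᵢ!`. Splitting off the first tree of a forest then shows that
`wₘ = ∑_{|t| = m + 1} 1/t!` satisfies `(m + 2) w_{m+1} = ∑_{i+j=m} (j + 1) wᵢ wⱼ`; averaging this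
with its mirror image under `i ↔ j` gives `2 w_{m+1} = ∑_{i+j=m} wᵢ wⱼ`, the Catalan recursion
for `2ᵐ wₘ`. Hence `wₘ = Cₘ / 2ᵐ = (2m)! / (2ᵐ (m+1)! m!)`.
-/

open scoped Classical

/-- Rooted plane trees: a tree is a root together with the ordered list of
the subtrees hanging from its children (left-to-right order). -/
inductive PTree where
  | node : List PTree → PTree

namespace PTree

instance : Inhabited PTree := ⟨.node []⟩

/-- number of nodes -/
def size : PTree → ℕ
  | node l => 1 + (l.attach.map (fun c => size c.1)).sum
decreasing_by
  have := List.sizeOf_lt_of_mem c.2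
  simp only [node.sizeOf_spec]; omega

/-- tree factorial: `t! = |t| * ∏ᵢ tᵢ!` -/
def tfact : PTree → ℕ
  | node l => size (node l) * (l.attach.map (fun c => tfact c.1)).prod
decreasing_by
  have := List.sizeOf_lt_of_mem c.2
  simp only [node.sizeOf_spec]; omega

/-- Shape equivalence: two plane trees have the same underlying rooted tree,
i.e. there is a bijection between children matching shape-equivalent subtrees. -/
inductive ShapeEq : PTree → PTree → Prop
  | node {l₁ l₂ : List PTree} (e : Fin l₁.length ≃ Fin l₂.length)
      (h : ∀ i, ShapeEq (l₁.get i) (l₂.get (e i))) :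
      ShapeEq (node l₁) (node l₂)

lemma size_pos (t : PTree) : 0 < t.size := by
  cases t; simp [size]

/-- The plane tree encoded by a parent function `p : Fin n → Fin n`:
`shapeAux n p fuel i` is the subtree rooted at node `i`, whose children are the
`j` with `p j = i` and `i < j` (ordered by label). `fuel = n` suffices. -/
def shapeAux (n : ℕ) (p : Fin n → Fin n) : ℕ → Fin n → PTree
  | 0, _ => node []
  | fuel+1, i =>
      node (((List.finRange n).filter (fun j => decide (p j = i ∧ i < j))).map
        (shapeAux n p fuel))

/-- The plane tree encoded by a parent function (rooted at node `0`). -/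
def shapeOf {n : ℕ} (p : Fin n → Fin n) : PTree :=
  if h : 0 < n then shapeAux n p n ⟨0, h⟩ else node []

/-- `alpha t` is the number of rooted labelled (increasing) trees of shape `t`:
labelled trees are encoded by their parent function, the root carrying the
label `0` and labels increasing away from the root. -/
noncomputable def alpha (t : PTree) : ℕ :=
  Nat.card {p : Fin t.size → Fin t.size //
    p ⟨0, t.size_pos⟩ = ⟨0, t.size_pos⟩ ∧
    (∀ j : Fin t.size, 0 < (j : ℕ) → (p j : ℕ) < j) ∧
    ShapeEq (shapeOf p) t}

/-- `kappa t` is the number of rooted plane trees of shape `t`. -/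
noncomputable def kappa (t : PTree) : ℕ := Nat.card {t' : PTree // ShapeEq t' t}

/-- symmetry factor: `σ(B₊(t₁^{n₁},…,t_m^{n_m})) = ∏ᵢ nᵢ! σ(tᵢ)^{nᵢ}`. -/
noncomputable def sym : PTree → ℕ
  | node l =>
      (∏ j : Fin l.length,
        (l.take ((j : ℕ) + 1)).countP (fun c => decide (ShapeEq c (l.get j)))) *
      (l.attach.map (fun c => sym c.1)).prod
decreasing_by
  have := List.sizeOf_lt_of_mem c.2
  simp only [node.sizeOf_spec]; omega

/-- elementary differentials: `δ_• = 1`, `δ_t = k! ψ_k ∏ᵢ δ_{tᵢ}`. -/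
def delta (ψ : ℕ → ℝ) : PTree → ℝ
  | node l =>
      (Nat.factorial l.length : ℝ) * ψ l.length *
      (l.attach.map (fun c => delta ψ c.1)).prod
decreasing_by
  have := List.sizeOf_lt_of_mem c.2
  simp only [node.sizeOf_spec]; omega

/-- bare Green function with weights `B`: `B(t) = B_{|t|} ∏ᵢ B(tᵢ)`. -/
def bare (B : ℕ → ℝ) : PTree → ℝ
  | node l => B (size (node l)) * (l.attach.map (fun c => bare B c.1)).prod
decreasing_by
  have := List.sizeOf_lt_of_mem c.2
  simp only [node.sizeOf_spec]; omega

/-- `wt ψ t = ∏_{v ∈ t} ψ (d v)` where `d v` is the outdegree of `v`. -/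
def wt (ψ : ℕ → ℝ) : PTree → ℝ
  | node l => ψ l.length * (l.attach.map (fun c => wt ψ c.1)).prod
decreasing_by
  have := List.sizeOf_lt_of_mem c.2
  simp only [node.sizeOf_spec]; omega

/-- `nodeProd B t = ∏_{w ≠ root} B_{|t_w|}`, product over non-root nodes of `t`. -/
def nodeProd (B : ℕ → ℝ) : PTree → ℝ
  | node l => (l.attach.map (fun c => B (size c.1) * nodeProd B c.1)).prod
decreasing_by
  have := List.sizeOf_lt_of_mem c.2
  simp only [node.sizeOf_spec]; omega

/-- `R` is a set of representatives of the rooted trees with `n` nodes: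
every plane tree of size `n` is shape-equivalent to exactly one member of `R`. -/
def IsTransversal (n : ℕ) (R : Finset PTree) : Prop :=
  (∀ t ∈ R, size t = n) ∧
  ∀ t : PTree, size t = n → ∃! u, u ∈ R ∧ ShapeEq t u

end PTree

theorem Set.Finite.setOf_length_le_forall_mem {α : Type*} {s : Set α} (hs : s.Finite) (n : ℕ) :
    {l : List α | l.length ≤ n ∧ ∀ x ∈ l, x ∈ s}.Finite := by
  have := hs.to_subtype
  refine ((List.finite_length_le s n).image (List.map Subtype.val)).subset ?_
  rintro l ⟨hlen, hl⟩
  exact ⟨l.attach.map fun x => ⟨x.1, hl x.1 x.2⟩, by simpa using hlen, by simp⟩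

open Finset

theorem two_mul_sum_antidiagonal_snd_succ_mul {R : Type*} [CommSemiring R] (w : ℕ → R) (m : ℕ) :
    2 * ∑ p ∈ antidiagonal m, (p.2 + 1 : R) * (w p.1 * w p.2) =
      (m + 2) * ∑ p ∈ antidiagonal m, w p.1 * w p.2 := by
  have hswap : ∑ p ∈ antidiagonal m, (p.2 + 1 : R) * (w p.1 * w p.2) =
      ∑ p ∈ antidiagonal m, (p.1 + 1 : R) * (w p.1 * w p.2) := by
    rw [← Nat.sum_antidiagonal_swap]
    refine sum_congr rfl fun p _ => ?_
    rw [Prod.fst_swap, Prod.snd_swap, mul_comm (w p.2)]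
  rw [two_mul]
  nth_rewrite 2 [hswap]
  rw [← sum_add_distrib, mul_sum]
  refine sum_congr rfl fun p hp => ?_
  rw [HasAntidiagonal.mem_antidiagonal] at hp
  rw [← add_mul, ← hp]
  push_cast
  ring

theorem catalan_mul_factorial_mul_factorial (m : ℕ) :
    catalan m * (m + 1).factorial * m.factorial = (2 * m).factorial := by
  have h := Nat.choose_mul_factorial_mul_factorial (n := 2 * m) (k := m) (by omega)
  rw [show 2 * m - m = m by omega, ← Nat.centralBinom_eq_two_mul_choose,
    ← succ_mul_catalan_eq_centralBinom] at h
  rw [Nat.factorial_succ, ← h]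
  ring

namespace PTree

theorem node_injective : Function.Injective node := fun _ _ h => node.inj h

theorem size_node (l : List PTree) : size (node l) = 1 + (l.map size).sum := by
  rw [size, List.attach_map_val]

theorem tfact_node (l : List PTree) :
    tfact (node l) = (1 + (l.map size).sum) * (l.map tfact).prod := by
  rw [tfact, List.attach_map_val, size_node]

theorem size_le_sum_map_size {l : List PTree} {t : PTree} (ht : t ∈ l) :
    size t ≤ (l.map size).sum :=
  List.le_sum_of_mem (List.mem_map_of_mem ht)

theorem length_le_sum_map_size (l : List PTree) : l.length ≤ (l.map size).sum := by
  simpa using List.length_le_sum_of_one_le (l.map size)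
    (by simp [Nat.one_le_iff_ne_zero, (size_pos _).ne'])

theorem finite_setOf_size_le : ∀ n : ℕ, {t : PTree | size t ≤ n}.Finite
  | 0 => by simp [(size_pos _).ne']
  | n + 1 => by
    refine (((finite_setOf_size_le n).setOf_length_le_forall_mem (n + 1)).image node).subset ?_
    rintro ⟨l⟩ hl
    rw [Set.mem_ofPred_eq, size_node] at hl
    exact ⟨l, ⟨by linarith [length_le_sum_map_size l],
      fun t ht => show size t ≤ n by linarith [size_le_sum_map_size ht]⟩, rfl⟩

theorem finite_setOf_sum_map_size_eq (m : ℕ) :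
    {l : List PTree | (l.map size).sum = m}.Finite := by
  refine ((finite_setOf_size_le (m + 1)).preimage node_injective.injOn).subset ?_
  intro l hl
  simp_all [size_node, add_comm]

noncomputable def trees (n : ℕ) : Finset PTree :=
  ((finite_setOf_size_le n).subset fun _ => le_of_eq : {t : PTree | size t = n}.Finite).toFinset

noncomputable def forests (m : ℕ) : Finset (List PTree) :=
  (finite_setOf_sum_map_size_eq m).toFinset

@[simp] theorem mem_trees {n : ℕ} {t : PTree} : t ∈ trees n ↔ size t = n := by
  simp [trees]

@[simp] theorem mem_forests {m : ℕ} {l : List PTree} : l ∈ forests m ↔ (l.map size).sum = m := by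
  simp [forests]

theorem forests_zero : forests 0 = {[]} := by
  ext l
  simp only [mem_forests, mem_singleton]
  refine ⟨fun h => List.eq_nil_of_length_eq_zero ?_, fun h => by simp [h]⟩
  linarith [length_le_sum_map_size l]

theorem trees_succ (m : ℕ) : trees (m + 1) = (forests m).map ⟨node, node_injective⟩ := by
  ext ⟨l⟩
  simp [size_node, add_comm]

theorem forests_succ (m : ℕ) :
    forests (m + 1) = (antidiagonal m).biUnion
      fun p => (trees (p.1 + 1) ×ˢ forests p.2).image fun q => q.1 :: q.2 := by
  ext l
  simp only [mem_forests, mem_biUnion, HasAntidiagonal.mem_antidiagonal, mem_image, mem_product,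
    mem_trees, Prod.exists]
  constructor
  · rcases l with _ | ⟨t, l⟩
    · simp
    · intro h
      simp only [List.map_cons, List.sum_cons] at h
      have := size_pos t
      exact ⟨size t - 1, (l.map size).sum, by omega, t, l, ⟨by omega, rfl⟩, rfl⟩
  · rintro ⟨i, j, hij, t, l, ⟨ht, rfl⟩, rfl⟩
    simp only [List.map_cons, List.sum_cons]
    omega

noncomputable def treeWeight (n : ℕ) : ℝ := ∑ t ∈ trees n, 1 / (tfact t : ℝ)

noncomputable def forestWeight (m : ℕ) : ℝ := ∑ l ∈ forests m, 1 / ((l.map tfact).prod : ℝ)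

theorem forestWeight_zero : forestWeight 0 = 1 := by
  simp [forestWeight, forests_zero]

theorem succ_mul_treeWeight_succ (m : ℕ) : (m + 1 : ℝ) * treeWeight (m + 1) = forestWeight m := by
  rw [treeWeight, trees_succ, sum_map, forestWeight, mul_sum]
  refine sum_congr rfl fun l hl => ?_
  rw [mem_forests] at hl
  simp only [Function.Embedding.coeFn_mk, tfact_node, hl, Nat.cast_mul, Nat.cast_add,
    Nat.cast_one, ← one_div_mul_one_div, ← mul_assoc]
  rw [add_comm (1 : ℝ), mul_one_div_cancel (by positivity), one_mul]

theorem forestWeight_succ (m : ℕ) :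
    forestWeight (m + 1) = ∑ p ∈ antidiagonal m, treeWeight (p.1 + 1) * forestWeight p.2 := by
  have hdisj : (antidiagonal m : Set (ℕ × ℕ)).PairwiseDisjoint
      fun p => (trees (p.1 + 1) ×ˢ forests p.2).image fun q => q.1 :: q.2 := by
    rintro ⟨i, j⟩ hij ⟨i', j'⟩ hij' hne
    simp only [mem_coe, HasAntidiagonal.mem_antidiagonal] at hij hij'
    refine disjoint_left.2 ?_
    simp only [mem_image, mem_product, mem_trees, mem_forests, Prod.exists, not_exists, not_and]
    rintro _ ⟨t, l, ⟨ht, -⟩, rfl⟩ t' l' ⟨ht', -⟩ h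
    cases List.cons.inj h |>.1
    exact hne (Prod.ext (by omega) (by omega))
  rw [forestWeight, forests_succ, sum_biUnion hdisj]
  refine sum_congr rfl fun p _ => ?_
  rw [sum_image fun q _ q' _ h => Prod.ext (List.cons.inj h).1 (List.cons.inj h).2,
    treeWeight, forestWeight, sum_mul_sum, ← sum_product']
  refine sum_congr rfl fun q _ => ?_
  rw [List.map_cons, List.prod_cons, Nat.cast_mul, one_div_mul_one_div]

theorem two_mul_treeWeight_succ_succ (m : ℕ) :
    2 * treeWeight (m + 2) =
      ∑ p ∈ antidiagonal m, treeWeight (p.1 + 1) * treeWeight (p.2 + 1) := by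
  have hrec : (m + 2 : ℝ) * treeWeight (m + 2) =
      ∑ p ∈ antidiagonal m, (p.2 + 1 : ℝ) * (treeWeight (p.1 + 1) * treeWeight (p.2 + 1)) := by
    rw [show (m + 2 : ℝ) = (m + 1 : ℕ) + 1 by push_cast; ring, succ_mul_treeWeight_succ,
      forestWeight_succ]
    refine sum_congr rfl fun p _ => ?_
    rw [← succ_mul_treeWeight_succ]
    ring
  refine mul_left_cancel₀ (show (m + 2 : ℝ) ≠ 0 by positivity) ?_
  rw [mul_left_comm, hrec]
  exact two_mul_sum_antidiagonal_snd_succ_mul (fun i => treeWeight (i + 1)) m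

theorem treeWeight_succ (m : ℕ) : treeWeight (m + 1) = catalan m / 2 ^ m := by
  induction m using Nat.strong_induction_on with
  | _ m ih =>
  rcases m with _ | m
  · simpa [forestWeight_zero] using succ_mul_treeWeight_succ 0
  have hterm : ∀ p ∈ antidiagonal m, treeWeight (p.1 + 1) * treeWeight (p.2 + 1) =
      (catalan p.1 * catalan p.2 : ℕ) / 2 ^ m := by
    intro p hp
    rw [HasAntidiagonal.mem_antidiagonal] at hp
    rw [ih p.1 (by omega), ih p.2 (by omega), ← hp, pow_add]
    push_cast
    field_simp
  have h := two_mul_treeWeight_succ_succ m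
  rw [sum_congr rfl hterm, ← sum_div, ← Nat.cast_sum, ← catalan_succ'] at h
  rw [eq_div_iff (by positivity)] at h
  rw [show m + 1 + 1 = m + 2 from rfl, pow_succ, eq_div_iff (by positivity)]
  linear_combination h

end PTree

open PTree in
/-- For every `n ≥ 1`, `∑_{t∈ℱₙ} 1/t! = (2n−2)!/(2^{n−1}·n!·(n−1)!)`, the sum
being over all rooted plane trees with `n` nodes. -/
theorem plane_sum_inv_tfact (n : ℕ) (hn : 1 ≤ n)
    (F : Finset PTree) (hF : ∀ t : PTree, t ∈ F ↔ size t = n) :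
    ∑ t ∈ F, (1 : ℝ) / (tfact t : ℝ) =
      (Nat.factorial (2 * n - 2) : ℝ) /
        (2 ^ (n - 1) * (Nat.factorial n : ℝ) * (Nat.factorial (n - 1) : ℝ)) := by
  obtain ⟨m, rfl⟩ : ∃ m, n = m + 1 := ⟨n - 1, by omega⟩
  have hF' : F = trees (m + 1) := by
    ext t
    rw [hF, mem_trees]
  rw [hF', ← treeWeight, treeWeight_succ, show 2 * (m + 1) - 2 = 2 * m by omega,
    Nat.add_sub_cancel, div_eq_div_iff (by positivity) (by positivity),
    ← catalan_mul_factorial_mul_factorial]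
  push_cast
  ring
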